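/- arXiv:1603.03675 — 2 statements merged into one kernel-verified Lean document; each statement's English description precedes it below -/
import Mathlib

section
/- For β ≠ 0 and c > 0, the function s ↦ 1 + Φ(β/s − c) − Φ(β/s + c) defined for s > 0 is non-increasing in s, where Φ is the standard normal CDF with density φ. -/
open MeasureTheory ProbabilityTheory Set

/-!
Writing `t = β / s`, the power is `1 - P(|Z - t| ≤ c)`, and the probability that a standard
Gaussian lands in a window of half-width `c` shrinks as the centre `t` moves away from `0`:
shifting the centre from `t` to `u` changes that probability by `∫ₜᵘ (φ(x + c) - φ(x - c)) dx`,
whose integrand has the sign of `-x`. As `s` grows, `β / s` moves monotonically towards `0`.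
-/

namespace ProbabilityTheory

variable {μ : ℝ} {v : NNReal}

lemma gaussianPDFReal_le_of_sq_le {x y : ℝ} (h : (x - μ) ^ 2 ≤ (y - μ) ^ 2) :
    gaussianPDFReal μ v y ≤ gaussianPDFReal μ v x := by
  unfold gaussianPDFReal
  gcongr

lemma cdf_gaussianReal_sub_cdf (hv : v ≠ 0) (a b : ℝ) :
    cdf (gaussianReal μ v) b - cdf (gaussianReal μ v) a = ∫ x in a..b, gaussianPDFReal μ v x := by
  have hint := integrable_gaussianPDFReal μ v
  have hcdf : ∀ x, cdf (gaussianReal μ v) x = ∫ t in Iic x, gaussianPDFReal μ v t := fun x ↦ by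
    rw [cdf_eq_real, measureReal_def, gaussianReal_apply_eq_integral μ hv,
      ENNReal.toReal_ofReal (setIntegral_nonneg measurableSet_Iic fun t _ ↦
        gaussianPDFReal_nonneg μ v t)]
  rw [hcdf, hcdf, intervalIntegral.integral_Iic_sub_Iic hint.integrableOn hint.integrableOn]

lemma cdf_gaussianReal_window_sub_window (hv : v ≠ 0) (c t u : ℝ) :
    (cdf (gaussianReal μ v) (u + c) - cdf (gaussianReal μ v) (u - c)) -
        (cdf (gaussianReal μ v) (t + c) - cdf (gaussianReal μ v) (t - c)) =
      (∫ x in t..u, gaussianPDFReal μ v (x + c)) - ∫ x in t..u, gaussianPDFReal μ v (x - c) := by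
  rw [intervalIntegral.integral_comp_add_right, intervalIntegral.integral_comp_sub_right,
    ← cdf_gaussianReal_sub_cdf hv, ← cdf_gaussianReal_sub_cdf hv]
  ring

variable {c : ℝ}

lemma antitoneOn_cdf_gaussianReal_window (hv : v ≠ 0) (hc : 0 ≤ c) :
    AntitoneOn (fun t ↦ cdf (gaussianReal μ v) (t + c) - cdf (gaussianReal μ v) (t - c))
      (Ici μ) := by
  intro t ht u _ htu
  have hint := integrable_gaussianPDFReal μ v
  have hmono : (∫ x in t..u, gaussianPDFReal μ v (x + c)) ≤
      ∫ x in t..u, gaussianPDFReal μ v (x - c) :=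
    intervalIntegral.integral_mono_on htu (hint.comp_add_right c).intervalIntegrable
      (hint.comp_sub_right c).intervalIntegrable fun x hx ↦
        gaussianPDFReal_le_of_sq_le (by nlinarith [mem_Ici.mp ht, hx.1])
  linarith [cdf_gaussianReal_window_sub_window (μ := μ) hv c t u]

lemma monotoneOn_cdf_gaussianReal_window (hv : v ≠ 0) (hc : 0 ≤ c) :
    MonotoneOn (fun t ↦ cdf (gaussianReal μ v) (t + c) - cdf (gaussianReal μ v) (t - c))
      (Iic μ) := by
  intro t _ u hu htu
  have hint := integrable_gaussianPDFReal μ v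
  have hmono : (∫ x in t..u, gaussianPDFReal μ v (x - c)) ≤
      ∫ x in t..u, gaussianPDFReal μ v (x + c) :=
    intervalIntegral.integral_mono_on htu (hint.comp_sub_right c).intervalIntegrable
      (hint.comp_add_right c).intervalIntegrable fun x hx ↦
        gaussianPDFReal_le_of_sq_le (by nlinarith [mem_Iic.mp hu, hx.2])
  linarith [cdf_gaussianReal_window_sub_window (μ := μ) hv c t u]

end ProbabilityTheory

theorem power_antitone_in_standard_error_general
    (β c : ℝ) (hc : 0 < c)
    (Φ : ℝ → ℝ) (hΦ : ∀ x, Φ x = ((gaussianReal 0 1) (Set.Iic x)).toReal) :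
    AntitoneOn (fun s : ℝ => 1 + Φ (β / s - c) - Φ (β / s + c)) (Ioi (0:ℝ)) := by
  obtain rfl : Φ = cdf (gaussianReal 0 1) :=
    funext fun x ↦ by rw [hΦ, cdf_eq_real, measureReal_def]
  intro s₁ hs₁ s₂ hs₂ hs
  suffices cdf (gaussianReal 0 1) (β / s₁ + c) - cdf (gaussianReal 0 1) (β / s₁ - c) ≤
      cdf (gaussianReal 0 1) (β / s₂ + c) - cdf (gaussianReal 0 1) (β / s₂ - c) by
    dsimp only
    linarith
  rcases le_total 0 β with hβ | hβ
  · exact antitoneOn_cdf_gaussianReal_window one_ne_zero hc.le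
      (div_nonneg hβ hs₂.le) (div_nonneg hβ hs₁.le) (div_le_div_of_nonneg_left hβ hs₁ hs)
  · exact monotoneOn_cdf_gaussianReal_window one_ne_zero hc.le
      (div_nonpos_of_nonpos_of_nonneg hβ hs₁.le)
      (div_nonpos_of_nonpos_of_nonneg hβ hs₂.le)
      (by simpa only [neg_div, neg_le_neg_iff] using
        div_le_div_of_nonneg_left (neg_nonneg.2 hβ) hs₁ hs)

/-- The power `s ↦ 1 + Φ(β/s − c) − Φ(β/s + c)` of the two-sided z-test is
non-increasing in the standard error `s > 0`, for `β ≠ 0` and `c > 0`. -/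
theorem power_antitone_in_standard_error
    (β c : ℝ) (hβ : β ≠ 0) (hc : 0 < c)
    (Φ : ℝ → ℝ) (hΦ : ∀ x, Φ x = ((gaussianReal 0 1) (Set.Iic x)).toReal) :
    AntitoneOn (fun s : ℝ => 1 + Φ (β / s - c) - Φ (β / s + c)) (Ioi (0:ℝ)) :=
  power_antitone_in_standard_error_general β c hc Φ hΦ
end

section
/- Let f = ∑_{k=1}^p X_{G_k}'β_k with V := ∑_{k=1}^p |β_k|₂ < ∞, and suppose the group OGA (with each group's design matrix satisfying X_{G_j}'X_{G_j}/N = I) is run for m ≥ 1 steps on data (Y, X) where Y = f(X) + U pointwise over the sample. Then the residual r_m after m steps satisfies ‖r_m‖_N² ≤ ‖Y − f‖_N² + 4V²/m, where ‖v‖_N² = (1/N)∑_{i=1}^N v_i². -/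
open Finset

/-!
Write `r_k` for the residual after `k` steps and `S_k` for the squared score of the group chosen at
step `k`. Adding to the previous fit the projection of `r_k` on the chosen group (orthonormal up to
the factor `N`) is admissible at step `k + 1`, so `‖r_{k+1}‖² ≤ ‖r_k‖² - S_k / N`. Since `r_k` is
orthogonal to the fit, `‖r_k‖² - ‖Y - f‖² ≤ 2⟪r_k, f⟫`, and by Cauchy–Schwarz group by group
together with the greedy choice (already selected groups are orthogonal to `r_k`),
`⟪r_k, f⟫ ≤ V √S_k`. Hence the excess `a_k = ‖r_k‖² - ‖Y - f‖²` satisfies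
`a_{k+1} ≤ a_k - a_k² / (4 V² N)` while positive, so `1 / a_k` grows by at least `1 / (4 V² N)`
per step and `a_m ≤ 4 V² N / m`.
-/

theorem inv_add_inv_le_inv_of_le_sub_sq_div {x y C : ℝ} (hC : 0 < C) (hy : 0 < y)
    (h : y ≤ x - x ^ 2 / C) : x⁻¹ + C⁻¹ ≤ y⁻¹ := by
  have hx : 0 < x := hy.trans_le (h.trans (sub_le_self _ (by positivity)))
  have h' : y * C ≤ x * C - x ^ 2 := by
    have := mul_le_mul_of_nonneg_right h hC.le
    rwa [sub_mul, div_mul_cancel₀ _ hC.ne'] at this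
  rw [inv_add_inv hx.ne' hC.ne', inv_eq_one_div, div_le_div_iff₀ (by positivity) hy]
  nlinarith [mul_le_mul_of_nonneg_left h' (add_pos hx hC).le]

theorem le_div_of_le_sub_of_sq_le_mul {C : ℝ} (hC : 0 ≤ C) {a s : ℕ → ℝ}
    (hs : ∀ k, 0 ≤ s k) (hdec : ∀ k, a (k + 1) ≤ a k - s k)
    (hbound : ∀ k, 0 ≤ a k → a k ^ 2 ≤ C * s k) {m : ℕ} (hm : m ≠ 0) :
    a m ≤ C / m := by
  have hanti : Antitone a :=
    antitone_nat_of_succ_le fun k => (hdec k).trans (sub_le_self _ (hs k))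
  by_contra! hlt
  have ham : 0 < a m := (div_nonneg hC m.cast_nonneg).trans_lt hlt
  have hpos : ∀ k ≤ m, 0 < a k := fun k hk => ham.trans_le (hanti hk)
  obtain rfl | hC := hC.eq_or_lt
  · nlinarith [hbound m ham.le]
  have hinv : ∀ k ≤ m, k / C ≤ (a k)⁻¹ := by
    intro k hk
    induction k with
    | zero => simpa using (hpos 0 hk).le
    | succ k ih =>
      have hk' : k ≤ m := k.le_succ.trans hk
      have hstep : a (k + 1) ≤ a k - a k ^ 2 / C :=
        (hdec k).trans (sub_le_sub_left ((div_le_iff₀' hC).2 (hbound k (hpos k hk').le)) _)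
      calc ((k + 1 : ℕ) : ℝ) / C = k / C + C⁻¹ := by push_cast; ring
        _ ≤ (a k)⁻¹ + C⁻¹ := by gcongr; exact ih hk'
        _ ≤ (a (k + 1))⁻¹ := inv_add_inv_le_inv_of_le_sub_sq_div hC (hpos _ hk) hstep
  have hmC : 0 < (m : ℝ) / C := div_pos (by positivity) hC
  have := (le_inv_comm₀ hmC ham).1 (hinv m le_rfl)
  rw [inv_div] at this
  exact hlt.not_ge this

section InnerProductSpace

variable {E : Type*} [NormedAddCommGroup E] [InnerProductSpace ℝ E]

theorem norm_sub_sum_inner_div_smul_sq {ι : Type*} [Fintype ι] [DecidableEq ι] {v : ι → E}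
    {c : ℝ} (hc : c ≠ 0) (hv : ∀ a b, inner ℝ (v a) (v b) = if a = b then c else 0) (x : E) :
    ‖x - ∑ a, (inner ℝ (v a) x / c) • v a‖ ^ 2 = ‖x‖ ^ 2 - (∑ a, inner ℝ (v a) x ^ 2) / c := by
  have hxg : inner ℝ x (∑ a, (inner ℝ (v a) x / c) • v a) = (∑ a, inner ℝ (v a) x ^ 2) / c := by
    simp only [inner_sum, real_inner_smul_right, sum_div, real_inner_comm x]
    exact sum_congr rfl fun a _ => by ring
  have hgg : ‖∑ a, (inner ℝ (v a) x / c) • v a‖ ^ 2 = (∑ a, inner ℝ (v a) x ^ 2) / c := by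
    rw [← real_inner_self_eq_norm_sq, sum_inner]
    simp only [inner_sum, real_inner_smul_left, real_inner_smul_right, hv, mul_ite, mul_zero,
      sum_ite_eq, mem_univ, if_true, sum_div]
    exact sum_congr rfl fun a _ => by field_simp
  rw [norm_sub_sq_real, hxg, hgg]
  ring

theorem inner_sum_sum_smul_le {κ : Type*} [Fintype κ] {ι : κ → Type*} [∀ j, Fintype (ι j)]
    (v : ∀ j, ι j → E) (β : ∀ j, ι j → ℝ) (x : E) {T : ℝ}
    (hT : ∀ j, ∑ a, inner ℝ (v j a) x ^ 2 ≤ T) :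
    inner ℝ x (∑ j, ∑ a, β j a • v j a) ≤ (∑ j, √(∑ a, β j a ^ 2)) * √T := by
  rw [inner_sum, sum_mul]
  gcongr with j
  simp only [inner_sum, real_inner_smul_right]
  calc ∑ a, β j a * inner ℝ x (v j a)
      ≤ √(∑ a, β j a ^ 2) * √(∑ a, inner ℝ x (v j a) ^ 2) := Real.sum_mul_le_sqrt_mul_sqrt _ _ _
    _ ≤ √(∑ a, β j a ^ 2) * √T := by gcongr; simpa only [real_inner_comm x] using hT j

namespace Submodule

variable (K : Submodule ℝ E) [K.HasOrthogonalProjection]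

theorem norm_sub_starProjection_sq_le (Y f : E) :
    ‖Y - K.starProjection Y‖ ^ 2 ≤ ‖Y - f‖ ^ 2 + 2 * inner ℝ (Y - K.starProjection Y) f := by
  have hsplit : Y - f = (Y - K.starProjection Y) + (K.starProjection Y - f) := by abel
  rw [hsplit, norm_add_sq_real, inner_sub_right,
    K.starProjection_inner_eq_zero Y _ (K.starProjection_apply_mem Y)]
  linarith [sq_nonneg ‖K.starProjection Y - f‖]

theorem norm_sub_starProjection_sq_le_of_mem {Y w : E} (hw : w ∈ K) :
    ‖Y - K.starProjection Y‖ ^ 2 ≤ ‖Y - w‖ ^ 2 := by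
  simpa [K.starProjection_inner_eq_zero Y w hw] using K.norm_sub_starProjection_sq_le Y w

theorem norm_sub_starProjection_sq_le_of_le {K' : Submodule ℝ E} [K'.HasOrthogonalProjection]
    (hKK' : K ≤ K') {ι : Type*} [Fintype ι] [DecidableEq ι] {v : ι → E} {c : ℝ} (hc : c ≠ 0)
    (hv : ∀ a b, inner ℝ (v a) (v b) = if a = b then c else 0) (hvK' : ∀ a, v a ∈ K') (Y : E) :
    ‖Y - K'.starProjection Y‖ ^ 2 ≤
      ‖Y - K.starProjection Y‖ ^ 2 - (∑ a, inner ℝ (v a) (Y - K.starProjection Y) ^ 2) / c := by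
  set x := Y - K.starProjection Y
  have hw : K.starProjection Y + ∑ a, (inner ℝ (v a) x / c) • v a ∈ K' :=
    K'.add_mem (hKK' (K.starProjection_apply_mem Y))
      (K'.sum_mem fun a _ => K'.smul_mem _ (hvK' a))
  calc ‖Y - K'.starProjection Y‖ ^ 2
      ≤ ‖Y - (K.starProjection Y + ∑ a, (inner ℝ (v a) x / c) • v a)‖ ^ 2 :=
        K'.norm_sub_starProjection_sq_le_of_mem hw
    _ = ‖x - ∑ a, (inner ℝ (v a) x / c) • v a‖ ^ 2 := by rw [sub_add_eq_sub_sub]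
    _ = _ := norm_sub_sum_inner_div_smul_sq hc hv x

end Submodule

end InnerProductSpace

namespace GroupOGA

variable {E : Type*} [NormedAddCommGroup E] [InnerProductSpace ℝ E]
  {κ : Type*} [DecidableEq κ] {ι : κ → Type*} {u : ∀ j, ι j → E} {jhat : ℕ → κ}
  {K : ℕ → Submodule ℝ E}

theorem mem_of_mem_image_range
    (hK : ∀ k, K k = Submodule.span ℝ (⋃ j ∈ (range k).image jhat, Set.range (u j)))
    {k : ℕ} {j : κ} (hj : j ∈ (range k).image jhat) (a : ι j) : u j a ∈ K k :=
  hK k ▸ Submodule.subset_span (Set.mem_iUnion₂.mpr ⟨j, hj, a, rfl⟩)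

theorem le_succ_of_eq_span
    (hK : ∀ k, K k = Submodule.span ℝ (⋃ j ∈ (range k).image jhat, Set.range (u j))) (k : ℕ) :
    K k ≤ K (k + 1) := by
  rw [hK, hK]
  gcongr
  exact Set.iUnion_mono' fun hj =>
    ⟨image_subset_image (range_subset_range.2 k.le_succ) hj, le_rfl⟩

variable [∀ j, Fintype (ι j)] [∀ k, (K k).HasOrthogonalProjection] {Y : E} {r : ℕ → E}

theorem sum_inner_sq_le_of_greedy
    (hK : ∀ k, K k = Submodule.span ℝ (⋃ j ∈ (range k).image jhat, Set.range (u j)))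
    (hr : ∀ k, r k = Y - (K k).starProjection Y)
    (hgreedy : ∀ k, ∀ j, j ∉ (range k).image jhat →
      ∑ a, inner ℝ (u j a) (r k) ^ 2 ≤ ∑ a, inner ℝ (u (jhat k) a) (r k) ^ 2)
    (k : ℕ) (j : κ) :
    ∑ a, inner ℝ (u j a) (r k) ^ 2 ≤ ∑ a, inner ℝ (u (jhat k) a) (r k) ^ 2 := by
  by_cases hj : j ∈ (range k).image jhat
  · have hzero : ∀ a, inner ℝ (u j a) (r k) = 0 := fun a => by
      rw [hr, real_inner_comm]
      exact Submodule.starProjection_inner_eq_zero Y _ (mem_of_mem_image_range hK hj a)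
    simpa [hzero] using sum_nonneg fun a _ => sq_nonneg _
  · exact hgreedy k j hj

theorem norm_sq_succ_le [∀ j, DecidableEq (ι j)] {c : ℝ} (hc : c ≠ 0)
    (hortho : ∀ j a b, inner ℝ (u j a) (u j b) = if a = b then c else 0)
    (hK : ∀ k, K k = Submodule.span ℝ (⋃ j ∈ (range k).image jhat, Set.range (u j)))
    (hr : ∀ k, r k = Y - (K k).starProjection Y) (k : ℕ) :
    ‖r (k + 1)‖ ^ 2 ≤ ‖r k‖ ^ 2 - (∑ a, inner ℝ (u (jhat k) a) (r k) ^ 2) / c := by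
  have h := (K k).norm_sub_starProjection_sq_le_of_le (le_succ_of_eq_span hK k) hc
    (hortho (jhat k)) (mem_of_mem_image_range hK (mem_image_of_mem _ (self_mem_range_succ k))) Y
  rwa [← hr, ← hr] at h

variable [Fintype κ]

theorem norm_sq_le_add_mul_sqrt
    (hK : ∀ k, K k = Submodule.span ℝ (⋃ j ∈ (range k).image jhat, Set.range (u j)))
    (hr : ∀ k, r k = Y - (K k).starProjection Y)
    (hgreedy : ∀ k, ∀ j, j ∉ (range k).image jhat →
      ∑ a, inner ℝ (u j a) (r k) ^ 2 ≤ ∑ a, inner ℝ (u (jhat k) a) (r k) ^ 2)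
    (β : ∀ j, ι j → ℝ) (k : ℕ) :
    ‖r k‖ ^ 2 ≤ ‖Y - ∑ j, ∑ a, β j a • u j a‖ ^ 2 +
      2 * ((∑ j, √(∑ a, β j a ^ 2)) * √(∑ a, inner ℝ (u (jhat k) a) (r k) ^ 2)) := by
  have hproj := (K k).norm_sub_starProjection_sq_le Y (∑ j, ∑ a, β j a • u j a)
  have hcs := inner_sum_sum_smul_le u β (r k) (sum_inner_sq_le_of_greedy hK hr hgreedy k)
  rw [← hr] at hproj
  linarith

theorem norm_sq_le_add_div [∀ j, DecidableEq (ι j)] {c : ℝ} (hc : 0 < c)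
    (hortho : ∀ j a b, inner ℝ (u j a) (u j b) = if a = b then c else 0)
    (hK : ∀ k, K k = Submodule.span ℝ (⋃ j ∈ (range k).image jhat, Set.range (u j)))
    (hr : ∀ k, r k = Y - (K k).starProjection Y)
    (hgreedy : ∀ k, ∀ j, j ∉ (range k).image jhat →
      ∑ a, inner ℝ (u j a) (r k) ^ 2 ≤ ∑ a, inner ℝ (u (jhat k) a) (r k) ^ 2)
    (β : ∀ j, ι j → ℝ) {m : ℕ} (hm : m ≠ 0) :
    ‖r m‖ ^ 2 ≤ ‖Y - ∑ j, ∑ a, β j a • u j a‖ ^ 2 + 4 * (∑ j, √(∑ a, β j a ^ 2)) ^ 2 * c / m := by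
  set f := ∑ j, ∑ a, β j a • u j a
  set V := ∑ j, √(∑ a, β j a ^ 2)
  set S : ℕ → ℝ := fun k => ∑ a, inner ℝ (u (jhat k) a) (r k) ^ 2
  have hS : ∀ k, 0 ≤ S k := fun k => sum_nonneg fun a _ => sq_nonneg _
  have hbound (k : ℕ) (hk : 0 ≤ ‖r k‖ ^ 2 - ‖Y - f‖ ^ 2) :
      (‖r k‖ ^ 2 - ‖Y - f‖ ^ 2) ^ 2 ≤ 4 * V ^ 2 * c * (S k / c) :=
    calc (‖r k‖ ^ 2 - ‖Y - f‖ ^ 2) ^ 2 ≤ (2 * (V * √(S k))) ^ 2 :=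
          pow_le_pow_left₀ hk (by linarith [norm_sq_le_add_mul_sqrt hK hr hgreedy β k]) 2
      _ = 4 * V ^ 2 * c * (S k / c) := by
          rw [mul_pow, mul_pow, Real.sq_sqrt (hS k)]
          field_simp
          ring
  have h := le_div_of_le_sub_of_sq_le_mul (by positivity) (fun k => div_nonneg (hS k) hc.le)
    (fun k => by linarith [norm_sq_succ_le hc.ne' hortho hK hr k]) hbound hm
  linarith

end GroupOGA

theorem group_oga_risk_bound_general
    (N p : ℕ) (hN : 0 < N)
    (d : Fin p → ℕ) (u : ∀ j, Fin (d j) → EuclideanSpace ℝ (Fin N))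
    (hortho : ∀ j a b,
      (inner ℝ (u j a) (u j b) : ℝ) = if a = b then (N : ℝ) else 0)
    (β : ∀ j, Fin (d j) → ℝ)
    (f Y : EuclideanSpace ℝ (Fin N))
    (hf : f = ∑ j, ∑ a, β j a • u j a)
    (V : ℝ) (hV : V = ∑ j, Real.sqrt (∑ a, (β j a) ^ 2))
    (jhat : ℕ → Fin p)
    (K : ℕ → Submodule ℝ (EuclideanSpace ℝ (Fin N)))
    (hK : ∀ k, K k = Submodule.span ℝ
      (⋃ j ∈ (Finset.range k).image jhat, Set.range (u j)))
    (r : ℕ → EuclideanSpace ℝ (Fin N))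
    (hr : ∀ k, r k = Y - (Submodule.orthogonalProjection (K k) Y : EuclideanSpace ℝ (Fin N)))
    (hgreedy : ∀ k, ∀ j, j ∉ (Finset.range k).image jhat →
      ∑ a, (inner ℝ (u j a) (r k) : ℝ) ^ 2
        ≤ ∑ a, (inner ℝ (u (jhat k) a) (r k) : ℝ) ^ 2)
    (m : ℕ) (hm : 1 ≤ m) :
    ‖r m‖ ^ 2 / N ≤ ‖Y - f‖ ^ 2 / N + 4 * V ^ 2 / m := by
  have hN' : (0 : ℝ) < N := by exact_mod_cast hN
  have h := GroupOGA.norm_sq_le_add_div hN' hortho hK hr hgreedy β (m := m) (by omega)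
  rw [← hf, ← hV] at h
  calc ‖r m‖ ^ 2 / N ≤ (‖Y - f‖ ^ 2 + 4 * V ^ 2 * N / m) / N := by gcongr
    _ = ‖Y - f‖ ^ 2 / N + 4 * V ^ 2 / m := by field_simp

/-- O(1/m) empirical-risk bound for the group orthogonal greedy algorithm:
with groups of regressors `u j` that are empirically orthonormalized
(`⟪u j a, u j b⟫ = N·δ_{ab}`), `f = ∑_j ∑_a β_{j,a} u_{j,a}`,
`V = ∑_j |β_j|₂`, residuals `r k = Y − proj_{K k} Y` where `K k` is the span of
all groups selected in the first `k` greedy steps, and greedy selection of the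
group maximizing `|X_{G_j}' r|₂` among unselected groups, the residual after
`m ≥ 1` steps satisfies `‖r_m‖_N² ≤ ‖Y − f‖_N² + 4V²/m`. -/
theorem group_oga_risk_bound
    (N p : ℕ) (hN : 0 < N) (hp : 0 < p)
    (d : Fin p → ℕ) (u : ∀ j, Fin (d j) → EuclideanSpace ℝ (Fin N))
    (hortho : ∀ j a b,
      (inner ℝ (u j a) (u j b) : ℝ) = if a = b then (N : ℝ) else 0)
    (β : ∀ j, Fin (d j) → ℝ)
    (f Y : EuclideanSpace ℝ (Fin N))
    (hf : f = ∑ j, ∑ a, β j a • u j a)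
    (V : ℝ) (hV : V = ∑ j, Real.sqrt (∑ a, (β j a) ^ 2))
    (jhat : ℕ → Fin p)
    (K : ℕ → Submodule ℝ (EuclideanSpace ℝ (Fin N)))
    (hK : ∀ k, K k = Submodule.span ℝ
      (⋃ j ∈ (Finset.range k).image jhat, Set.range (u j)))
    (r : ℕ → EuclideanSpace ℝ (Fin N))
    (hr : ∀ k, r k = Y - (Submodule.orthogonalProjection (K k) Y : EuclideanSpace ℝ (Fin N)))
    (hgreedy : ∀ k, ∀ j, j ∉ (Finset.range k).image jhat →
      ∑ a, (inner ℝ (u j a) (r k) : ℝ) ^ 2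
        ≤ ∑ a, (inner ℝ (u (jhat k) a) (r k) : ℝ) ^ 2)
    (m : ℕ) (hm : 1 ≤ m) :
    ‖r m‖ ^ 2 / N ≤ ‖Y - f‖ ^ 2 / N + 4 * V ^ 2 / m :=
  group_oga_risk_bound_general N p hN d u hortho β f Y hf V hV jhat K hK r hr hgreedy m hm
end
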